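/- arXiv:1408.3991 — 5 statements merged into one kernel-verified Lean document; each statement's English description precedes it below -/
import Mathlib

section
/- For every given integer a > 0, there exist at most finitely many pairs (m, k) with m a positive integer and k ≥ 3 an integer such that -m+ζ_k and -(m+a)+ζ_k are multiplicatively dependent. -/
open Polynomial

/-- Two elements of a field are *multiplicatively independent* if the only integers `r, s`
with `α ^ r = β ^ s` are `r = s = 0`. -/
def MultIndep {F : Type*} [Field F] (α β : F) : Prop :=
  ∀ r s : ℤ, α ^ r = β ^ s → r = 0 ∧ s = 0

/-- An element of a field is a *root of unity* if some positive power of it equals `1`. -/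
def IsRootOfUnity {F : Type*} [Field F] (α : F) : Prop :=
  ∃ n : ℕ, 0 < n ∧ α ^ n = 1

/-!
If `(-m + ζ) ^ r = (-n + ζ) ^ s` with `n = m + a`, then sending `ζ` to each primitive `k`-th root
of unity `ω ∈ ℂ` and taking absolute values gives `r log |m - ω|² = s log |n - ω|²`, where
`|x - ω|² = x² - 2 x Re ω + 1`.

If `φ k ≥ 5`, the primitive roots have at least three distinct real parts `c`. As a function
of `c`, the difference of the two sides has a derivative whose numerator is affine in `c`, so by
Rolle's theorem it has at most two zeros unless `r = s = 0`.

If `φ k ≤ 4`, multiplying over all `ω` gives `Φₖ(m) ^ r = Φₖ(n) ^ s` for the integers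
`1 < Φₖ(m) < Φₖ(n)`. Up to sign `r > s > 0`, so `Φₖ(m) ^ s ∣ Φₖ(n) ^ s`, hence `Φₖ(m) ∣ Φₖ(n)` and
`Φₖ(n) ≥ 2 Φₖ(m)`. This is impossible once `m` is large, since
`Φₖ(n) / Φₖ(m) ≤ ((n + 1) / (m - 1)) ^ 4`. Finally `φ k ≤ 4` bounds `k`, because
`p ^ e ≤ 2 φ (p ^ e)` for every prime power.
-/

open Finset Real ComplexConjugate
open scoped Nat

lemma Nat.Prime.pow_le_two_mul_totient {p : ℕ} (hp : p.Prime) (e : ℕ) :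
    p ^ e ≤ 2 * φ (p ^ e) := by
  cases e with
  | zero => simp
  | succ e =>
    rw [Nat.totient_prime_pow_succ hp, pow_succ]
    calc p ^ e * p ≤ p ^ e * (2 * (p - 1)) := Nat.mul_le_mul_left _ (by have := hp.two_le; omega)
      _ = 2 * (p ^ e * (p - 1)) := by ring

lemma Nat.dvd_factorial_of_totient_le {k N : ℕ} (hk : k ≠ 0) (h : φ k ≤ N) : k ∣ (2 * N)! := by
  refine (Nat.dvd_iff_prime_pow_dvd_dvd _ _).2 fun p e hp hpe ↦
    Nat.dvd_factorial (pow_pos hp.pos e) ?_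
  have := Nat.le_of_dvd (Nat.totient_pos.2 (Nat.pos_of_ne_zero hk)) (Nat.totient_dvd_of_dvd hpe)
  linarith [hp.pow_le_two_mul_totient e]

lemma Nat.eq_zero_of_pow_eq_pow {A B r s : ℕ} (hA : 1 < A) (hAB : A < B) (hB : B < 2 * A)
    (h : A ^ r = B ^ s) : r = 0 ∧ s = 0 := by
  obtain rfl | hs := Nat.eq_zero_or_pos s
  · simpa [Nat.pow_eq_one, hA.ne'] using h
  have hsr : s ≤ r := by
    have : A ^ s < A ^ r := h ▸ Nat.pow_lt_pow_left hAB hs.ne'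
    exact ((Nat.pow_lt_pow_iff_right hA).1 this).le
  obtain ⟨t, rfl⟩ : A ∣ B := (Nat.pow_dvd_pow_iff hs.ne').1 (h ▸ pow_dvd_pow A hsr)
  have : 1 < t := by nlinarith
  have : t < 2 := by nlinarith
  omega

lemma eq_zero_of_natCast_zpow_eq_zpow {A B : ℕ} (hA : 1 < A) (hAB : A < B) (hB : B < 2 * A)
    {r s : ℤ} (h : (A : ℝ) ^ r = (B : ℝ) ^ s) : r = 0 ∧ s = 0 := by
  have hA' : (1 : ℝ) < A := by exact_mod_cast hA
  have hB' : (1 : ℝ) < B := by exact_mod_cast hA.trans hAB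
  have hlog : |(r : ℝ)| * log A = |(s : ℝ)| * log B := by
    have := congrArg (|·|) (congrArg log h)
    simpa only [Real.log_zpow, abs_mul, abs_of_pos (Real.log_pos hA'),
      abs_of_pos (Real.log_pos hB')] using this
  have hpow : (A : ℝ) ^ r.natAbs = (B : ℝ) ^ s.natAbs := by
    refine Real.log_injOn_pos (pow_pos (zero_lt_one.trans hA') _)
      (pow_pos (zero_lt_one.trans hB') _) ?_
    simpa only [Real.log_pow, Nat.cast_natAbs, Int.cast_abs] using hlog
  exact (Nat.eq_zero_of_pow_eq_pow hA hAB hB (by exact_mod_cast hpow)).imp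
    Int.natAbs_eq_zero.1 Int.natAbs_eq_zero.1

lemma pow_lt_two_mul_pow_of_le_four {x y : ℝ} (hx : 0 < x) (hxy : x ≤ y) (hy : 8 * y ≤ 9 * x)
    {d : ℕ} (hd : d ≤ 4) : y ^ d < 2 * x ^ d := by
  have hratio : (y / x) ^ d < 2 :=
    calc (y / x) ^ d ≤ (y / x) ^ 4 := pow_le_pow_right₀ ((one_le_div hx).2 hxy) hd
      _ ≤ (9 / 8) ^ 4 :=
        pow_le_pow_left₀ (div_nonneg (by linarith) hx.le) ((div_le_iff₀ hx).2 (by linarith)) 4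
      _ < 2 := by norm_num
  rwa [div_pow, div_lt_iff₀ (pow_pos hx d)] at hratio

lemma Finset.exists_lt_lt_of_two_lt_card {α : Type*} [LinearOrder α] {s : Finset α}
    (hs : 2 < #s) : ∃ a ∈ s, ∃ b ∈ s, ∃ c ∈ s, a < b ∧ b < c := by
  let e := s.orderEmbOfFin rfl
  exact ⟨e ⟨0, by omega⟩, s.orderEmbOfFin_mem rfl _, e ⟨1, by omega⟩, s.orderEmbOfFin_mem rfl _,
    e ⟨2, hs⟩, s.orderEmbOfFin_mem rfl _, e.strictMono (by simp), e.strictMono (by simp)⟩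

lemma sq_sub_two_mul_add_one_pos {x c : ℝ} (hx : 0 < x) (hc : c < 1) :
    0 < x ^ 2 - 2 * x * c + 1 := by
  nlinarith [sq_nonneg (x - 1), mul_pos hx (sub_pos.2 hc)]

lemma hasDerivAt_log_sq_sub_two_mul_add_one {x c : ℝ} (hx : 0 < x) (hc : c < 1) :
    HasDerivAt (fun c ↦ log (x ^ 2 - 2 * x * c + 1)) (-(2 * x) / (x ^ 2 - 2 * x * c + 1)) c := by
  have : HasDerivAt (fun c ↦ x ^ 2 - 2 * x * c + 1) (-(2 * x)) c := by
    simpa using (((hasDerivAt_id c).const_mul (2 * x)).const_sub (x ^ 2)).add_const 1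
  exact this.log (sq_sub_two_mul_add_one_pos hx hc).ne'

theorem eq_zero_of_mul_log_eq_mul_log {m n r s c₁ c₂ c₃ : ℝ} (hm : 0 < m) (hn : 0 < n)
    (hmn : m ≠ n) (hmn₁ : m * n ≠ 1) (h₁₂ : c₁ < c₂) (h₂₃ : c₂ < c₃) (h₃ : c₃ < 1)
    (h : ∀ c ∈ ({c₁, c₂, c₃} : Set ℝ),
      r * log (m ^ 2 - 2 * m * c + 1) = s * log (n ^ 2 - 2 * n * c + 1)) :
    r = 0 ∧ s = 0 := by
  set f : ℝ → ℝ := fun c ↦ r * log (m ^ 2 - 2 * m * c + 1) - s * log (n ^ 2 - 2 * n * c + 1)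
  set f' : ℝ → ℝ := fun c ↦
    r * (-(2 * m) / (m ^ 2 - 2 * m * c + 1)) - s * (-(2 * n) / (n ^ 2 - 2 * n * c + 1))
  have hf' : ∀ c < 1, HasDerivAt f (f' c) c := fun c hc ↦
    ((hasDerivAt_log_sq_sub_two_mul_add_one hm hc).const_mul r).sub
      ((hasDerivAt_log_sq_sub_two_mul_add_one hn hc).const_mul s)
  have hf : ∀ c ∈ ({c₁, c₂, c₃} : Set ℝ), f c = 0 := fun c hc ↦ sub_eq_zero.2 (h c hc)
  have rolle : ∀ a b, a < b → b ≤ c₃ → f a = f b → ∃ ξ ∈ Set.Ioo a b, f' ξ = 0 :=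
    fun a b hab hb hfab ↦ exists_hasDerivAt_eq_zero hab
      (fun c hc ↦ (hf' c (by linarith [hc.2])).continuousAt.continuousWithinAt) hfab
      (fun c hc ↦ hf' c (by linarith [hc.2]))
  obtain ⟨ξ₁, hξ₁, h₁⟩ := rolle c₁ c₂ h₁₂ h₂₃.le (by rw [hf c₁ (by simp), hf c₂ (by simp)])
  obtain ⟨ξ₂, hξ₂, h₂⟩ := rolle c₂ c₃ h₂₃ le_rfl (by rw [hf c₂ (by simp), hf c₃ (by simp)])
  have affine : ∀ ξ < 1, f' ξ = 0 →
      n * s * (m ^ 2 - 2 * m * ξ + 1) = m * r * (n ^ 2 - 2 * n * ξ + 1) := by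
    intro ξ hξ h0
    rw [sub_eq_zero, mul_div_assoc', mul_div_assoc', div_eq_div_iff
      (sq_sub_two_mul_add_one_pos hm hξ).ne' (sq_sub_two_mul_add_one_pos hn hξ).ne'] at h0
    linear_combination h0 / 2
  have e₁ := affine ξ₁ (by linarith [hξ₁.2]) h₁
  have e₂ := affine ξ₂ (by linarith [hξ₂.2]) h₂
  have hrs : r = s := by
    have hprod : (2 * m * n * (ξ₂ - ξ₁)) * (r - s) = 0 := by linear_combination e₂ - e₁
    have hξ : 2 * m * n * (ξ₂ - ξ₁) ≠ 0 := by
      have := hξ₁.2.trans hξ₂.1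
      positivity
    linarith [(mul_eq_zero.1 hprod).resolve_left hξ]
  subst hrs
  have hprod : ((n - m) * (1 - m * n)) * r = 0 := by linear_combination e₁
  have hr := (mul_eq_zero.1 hprod).resolve_left
    (mul_ne_zero (sub_ne_zero.2 hmn.symm) (sub_ne_zero.2 (Ne.symm hmn₁)))
  exact ⟨hr, hr⟩

lemma Complex.norm_ofReal_sub_sq {ω : ℂ} (hω : ‖ω‖ = 1) (x : ℝ) :
    ‖(x : ℂ) - ω‖ ^ 2 = x ^ 2 - 2 * x * ω.re + 1 := by
  have h := Complex.normSq_eq_norm_sq ω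
  rw [hω, Complex.normSq_apply] at h
  rw [← Complex.normSq_eq_norm_sq, Complex.normSq_apply]
  simp only [Complex.sub_re, Complex.ofReal_re, Complex.sub_im, Complex.ofReal_im]
  linear_combination h

lemma Complex.norm_ofReal_sub_lt_norm_ofReal_sub {ω : ℂ} (hω : ‖ω‖ = 1) (hre : ω.re < 1)
    {x y : ℝ} (hx : 1 ≤ x) (hxy : x < y) : ‖(x : ℂ) - ω‖ < ‖(y : ℂ) - ω‖ := by
  refine lt_of_pow_lt_pow_left₀ 2 (norm_nonneg _) ?_
  rw [Complex.norm_ofReal_sub_sq hω, Complex.norm_ofReal_sub_sq hω]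
  nlinarith

lemma Complex.eq_or_eq_conj_of_norm_eq_of_re_eq {z w : ℂ} (hn : ‖z‖ = ‖w‖) (hre : z.re = w.re) :
    z = w ∨ z = conj w := by
  have h : z.im ^ 2 = w.im ^ 2 := by
    have := congrArg (· ^ 2) hn
    simp only [← Complex.normSq_eq_norm_sq, Complex.normSq_apply, hre] at this
    linear_combination this
  rcases sq_eq_sq_iff_eq_or_eq_neg.1 h with him | him
  · exact .inl (Complex.ext hre him)
  · exact .inr (Complex.ext (by simpa using hre) (by simpa using him))

lemma Complex.re_lt_one_of_norm_eq_one {ω : ℂ} (hω : ‖ω‖ = 1) (h1 : ω ≠ 1) : ω.re < 1 := by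
  refine (Complex.re_le_norm ω).trans_eq hω |>.lt_of_ne fun hre ↦ h1 ?_
  simpa using Complex.eq_or_eq_conj_of_norm_eq_of_re_eq (w := 1) (by simpa using hω)
    (by simpa using hre)

lemma IsPrimitiveRoot.re_lt_one {ω : ℂ} {k : ℕ} (hω : IsPrimitiveRoot ω k) (hk : 1 < k) :
    ω.re < 1 :=
  Complex.re_lt_one_of_norm_eq_one (hω.norm'_eq_one (by omega)) (hω.ne_one hk)

lemma Complex.card_le_two_mul_card_image_re {s : Finset ℂ} (hs : ∀ z ∈ s, ‖z‖ = 1) :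
    #s ≤ 2 * #(s.image Complex.re) := by
  refine card_le_mul_card_image s 2 fun c hc ↦ ?_
  obtain ⟨w, hw, rfl⟩ := mem_image.1 hc
  refine (card_le_card (t := {w, conj w}) fun z hz ↦ ?_).trans card_le_two
  obtain ⟨hz, hre⟩ := mem_filter.1 hz
  rcases Complex.eq_or_eq_conj_of_norm_eq_of_re_eq ((hs z hz).trans (hs w hw).symm) hre with h | h
    <;> simp [h]

lemma IsPrimitiveRoot.exists_ringHom_apply_eq {k : ℕ} [NeZero k] {K : Type*} [Field K]
    [Algebra ℚ K] [IsCyclotomicExtension {k} ℚ K] {ζ : K} (hζ : IsPrimitiveRoot ζ k) {ω : ℂ}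
    (hω : IsPrimitiveRoot ω k) : ∃ σ : K →+* ℂ, σ ζ = ω := by
  have hirr := cyclotomic.irreducible_rat (NeZero.pos k)
  let σ := (hζ.embeddingsEquivPrimitiveRoots ℂ hirr).symm
    ⟨ω, (mem_primitiveRoots (NeZero.pos k)).2 hω⟩
  exact ⟨σ, by simpa [σ] using (hζ.embeddingsEquivPrimitiveRoots_apply_coe ℂ hirr σ).symm⟩

lemma IsPrimitiveRoot.norm_sub_zpow_eq_of_zpow_eq {k : ℕ} [NeZero k] {K : Type*} [Field K]
    [Algebra ℚ K] [IsCyclotomicExtension {k} ℚ K] {ζ : K} (hζ : IsPrimitiveRoot ζ k) {m n : ℕ}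
    {r s : ℤ} (h : (-(m : K) + ζ) ^ r = (-(n : K) + ζ) ^ s) {ω : ℂ} (hω : IsPrimitiveRoot ω k) :
    ‖(m : ℂ) - ω‖ ^ r = ‖(n : ℂ) - ω‖ ^ s := by
  obtain ⟨σ, hσ⟩ := hζ.exists_ringHom_apply_eq hω
  have := congrArg (‖σ ·‖) h
  simp only [map_zpow₀, map_add, map_neg, map_natCast, hσ, norm_zpow] at this
  rwa [norm_sub_rev (m : ℂ), norm_sub_rev (n : ℂ), ← neg_add_eq_sub, ← neg_add_eq_sub]

lemma natAbs_cyclotomic_eval_eq_prod_norm {k : ℕ} (hk : k ≠ 0) (x : ℤ) :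
    (((cyclotomic k ℤ).eval x).natAbs : ℝ) =
      ∏ ω ∈ primitiveRoots k ℂ, ‖(x : ℂ) - ω‖ := by
  have hprod : ∏ ω ∈ primitiveRoots k ℂ, ((x : ℂ) - ω) =
      (cyclotomic k ℂ).eval (x : ℂ) := by
    rw [cyclotomic_eq_prod_X_sub_primitiveRoots (Complex.isPrimitiveRoot_exp k hk),
      eval_prod]
    simp
  rw [← norm_prod, hprod, ← map_intCast (Int.castRingHom ℂ), cyclotomic.eval_apply,
    eq_intCast, Int.cast_id, Complex.norm_intCast, Nat.cast_natAbs, Int.cast_abs]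

theorem eq_zero_of_forall_norm_zpow_eq_of_five_le_totient {k : ℕ} (hk : 5 ≤ φ k) {m n : ℝ}
    (hm : 0 < m) (hn : 0 < n) (hmn : m ≠ n) (hmn₁ : m * n ≠ 1) {r s : ℤ}
    (h : ∀ ω ∈ primitiveRoots k ℂ, ‖(m : ℂ) - ω‖ ^ r = ‖(n : ℂ) - ω‖ ^ s) : r = 0 ∧ s = 0 := by
  have hk₁ : 1 < k := by
    by_contra! hk'
    interval_cases k <;> simp at hk
  have hroot : ∀ ω ∈ primitiveRoots k ℂ, IsPrimitiveRoot ω k := fun ω hω ↦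
    (mem_primitiveRoots (by omega)).1 hω
  have hC : 2 < #((primitiveRoots k ℂ).image Complex.re) := by
    have := Complex.card_le_two_mul_card_image_re fun ω hω ↦ (hroot ω hω).norm'_eq_one (by omega)
    rw [Complex.card_primitiveRoots] at this
    omega
  have hlog : ∀ c ∈ (primitiveRoots k ℂ).image Complex.re,
      (r : ℝ) * log (m ^ 2 - 2 * m * c + 1) = s * log (n ^ 2 - 2 * n * c + 1) := by
    intro c hc
    obtain ⟨ω, hω, rfl⟩ := mem_image.1 hc
    have hω₁ := (hroot ω hω).norm'_eq_one (by omega)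
    have := congrArg log (h ω hω)
    rw [Real.log_zpow, Real.log_zpow] at this
    rw [← Complex.norm_ofReal_sub_sq hω₁, ← Complex.norm_ofReal_sub_sq hω₁, Real.log_pow,
      Real.log_pow]
    linear_combination 2 * this
  obtain ⟨c₁, hc₁, c₂, hc₂, c₃, hc₃, h₁₂, h₂₃⟩ := exists_lt_lt_of_two_lt_card hC
  have h₃ : c₃ < 1 := by
    obtain ⟨ω, hω, rfl⟩ := mem_image.1 hc₃
    exact (hroot ω hω).re_lt_one hk₁
  have := eq_zero_of_mul_log_eq_mul_log hm hn hmn hmn₁ h₁₂ h₂₃ h₃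
    (by rintro c (rfl | rfl | rfl) <;> apply hlog <;> assumption)
  exact_mod_cast this

theorem eq_zero_of_forall_norm_zpow_eq_of_pow_totient_lt {k m n : ℕ} (hk : 1 < k) (hm : 2 ≤ m)
    (hmn : m < n) (hsize : ((n : ℝ) + 1) ^ φ k < 2 * ((m : ℝ) - 1) ^ φ k) {r s : ℤ}
    (h : ∀ ω ∈ primitiveRoots k ℂ, ‖(m : ℂ) - ω‖ ^ r = ‖(n : ℂ) - ω‖ ^ s) : r = 0 ∧ s = 0 := by
  have hroot : ∀ ω ∈ primitiveRoots k ℂ, IsPrimitiveRoot ω k := fun ω hω ↦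
    (mem_primitiveRoots (by omega)).1 hω
  set A := ((cyclotomic k ℤ).eval (m : ℤ)).natAbs
  set B := ((cyclotomic k ℤ).eval (n : ℤ)).natAbs
  have hA : (A : ℝ) = ∏ ω ∈ primitiveRoots k ℂ, ‖(m : ℂ) - ω‖ := by
    exact_mod_cast natAbs_cyclotomic_eval_eq_prod_norm (by omega) m
  have hB : (B : ℝ) = ∏ ω ∈ primitiveRoots k ℂ, ‖(n : ℂ) - ω‖ := by
    exact_mod_cast natAbs_cyclotomic_eval_eq_prod_norm (by omega) n
  have hA_low : (m - 1) ^ φ k < A :=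
    sub_one_pow_totient_lt_natAbs_cyclotomic_eval hk (by omega)
  have hA₁ : 1 < A := (Nat.one_le_pow _ _ (by omega)).trans_lt hA_low
  have hAB : A < B := by
    have hP : (primitiveRoots k ℂ).Nonempty :=
      ⟨_, (mem_primitiveRoots (by omega)).2 (Complex.isPrimitiveRoot_exp k (by omega))⟩
    rw [← Nat.cast_lt (α := ℝ), hA, hB]
    refine prod_lt_prod_of_nonempty (fun ω hω ↦ ?_) (fun ω hω ↦ ?_) hP
    · have hω₁ := (hroot ω hω).norm'_eq_one (by omega)
      have hm' : (2 : ℝ) ≤ m := by exact_mod_cast hm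
      calc (0 : ℝ) < ‖(m : ℂ)‖ - ‖ω‖ := by rw [Complex.norm_natCast, hω₁]; linarith
        _ ≤ ‖(m : ℂ) - ω‖ := norm_sub_norm_le _ _
    · exact_mod_cast Complex.norm_ofReal_sub_lt_norm_ofReal_sub
        ((hroot ω hω).norm'_eq_one (by omega)) ((hroot ω hω).re_lt_one hk)
        (x := m) (y := n) (by exact_mod_cast (by omega : 1 ≤ m)) (by exact_mod_cast hmn)
  have hB₂ : B < 2 * A := by
    have hB_up : (B : ℝ) ≤ ((n : ℝ) + 1) ^ φ k := by
      rw [hB, ← Complex.card_primitiveRoots, ← prod_const]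
      refine prod_le_prod (fun _ _ ↦ norm_nonneg _) fun ω hω ↦ ?_
      calc ‖(n : ℂ) - ω‖ ≤ ‖(n : ℂ)‖ + ‖ω‖ := norm_sub_le _ _
        _ = n + 1 := by rw [Complex.norm_natCast, (hroot ω hω).norm'_eq_one (by omega)]
    have hA_low' : ((m : ℝ) - 1) ^ φ k ≤ A := by
      have : (((m - 1) ^ φ k : ℕ) : ℝ) ≤ A := by exact_mod_cast hA_low.le
      rwa [Nat.cast_pow, Nat.cast_sub (by omega), Nat.cast_one] at this
    have : (B : ℝ) < 2 * A := by linarith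
    exact_mod_cast this
  refine eq_zero_of_natCast_zpow_eq_zpow hA₁ hAB hB₂ ?_
  rw [hA, hB, ← prod_zpow, ← prod_zpow]
  exact prod_congr rfl h

theorem le_and_totient_le_of_not_multIndep {k : ℕ} [NeZero k] {K : Type*} [Field K]
    [Algebra ℚ K] [IsCyclotomicExtension {k} ℚ K] {ζ : K} (hζ : IsPrimitiveRoot ζ k) (hk : 1 < k)
    {a m : ℕ} (ha : 0 < a) (hm : 0 < m)
    (hdep : ¬ MultIndep (-(m : K) + ζ) (-((m + a : ℕ) : K) + ζ)) :
    m ≤ 8 * a + 16 ∧ φ k ≤ 4 := by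
  simp only [MultIndep, not_forall] at hdep
  obtain ⟨r, s, hrs, hne⟩ := hdep
  have hnorm : ∀ ω ∈ primitiveRoots k ℂ, ‖(m : ℂ) - ω‖ ^ r = ‖((m + a : ℕ) : ℂ) - ω‖ ^ s :=
    fun ω hω ↦ hζ.norm_sub_zpow_eq_of_zpow_eq hrs ((mem_primitiveRoots (NeZero.pos k)).1 hω)
  have htot : φ k ≤ 4 := by
    by_contra! htot
    refine hne (eq_zero_of_forall_norm_zpow_eq_of_five_le_totient htot (m := m) (n := m + a)
      (by positivity) (by positivity) (by simp; omega)
      (by norm_cast; exact (by nlinarith : 1 < m * (m + a)).ne') (by exact_mod_cast hnorm))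
  refine ⟨?_, htot⟩
  by_contra! hm_large
  refine hne (eq_zero_of_forall_norm_zpow_eq_of_pow_totient_lt hk (by omega) (by omega) ?_ hnorm)
  have hm_large' : (8 * a + 17 : ℝ) ≤ m := by exact_mod_cast hm_large
  refine pow_lt_two_mul_pow_of_le_four ?_ ?_ ?_ htot <;> push_cast <;> linarith

theorem stmt3 (a : ℕ) (ha : 0 < a) :
    {q : ℕ × ℕ+ | 0 < q.1 ∧ 3 ≤ (q.2 : ℕ) ∧
      ∃ ζ : CyclotomicField q.2 ℚ, IsPrimitiveRoot ζ (q.2 : ℕ) ∧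
        ¬ MultIndep (-(q.1 : CyclotomicField q.2 ℚ) + ζ)
          (-((q.1 + a : ℕ) : CyclotomicField q.2 ℚ) + ζ)}.Finite := by
  refine ((Set.finite_Iic (8 * a + 16)).prod
    (Set.finite_Iic ((8 !).toPNat (Nat.factorial_pos 8)))).subset ?_
  intro q ⟨hm, hk, ζ, hζ, hdep⟩
  have : IsCyclotomicExtension {(q.2 : ℕ)} ℚ (CyclotomicField q.2 ℚ) :=
    CyclotomicField.isCyclotomicExtension _ _
  obtain ⟨hm_le, htot⟩ := le_and_totient_le_of_not_multIndep hζ (by omega) ha hm hdep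
  exact ⟨hm_le, PNat.coe_le_coe _ _ |>.1 <|
    Nat.le_of_dvd (Nat.factorial_pos 8) (Nat.dvd_factorial_of_totient_le q.2.ne_zero htot)⟩
end

section
/- Let k > 2 be an integer with k ≢ 2 (mod 4) and let x be an integer. Then Φ_k(x) = ±1 if and only if one of the following holds: x = 0; or x = 1 and k is not a prime power p^ℓ with ℓ > 0; or x = -1 and k is not of the form 2^ℓ with ℓ > 1. Moreover, Φ_k(1) = p whenever k = p^ℓ is a prime power, and Φ_{2^ℓ}(-1) = 2 whenever ℓ > 1. -/
/-!
For `k > 2` the value `Φ_k(x)` is positive, so `Φ_k(x) = ±1` means `Φ_k(x) = 1`.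
For `x ≥ 2` the bound `|Φ_k(x)| > x - 1` rules this out; negative arguments are moved to
positive ones by `Φ_k(-X) = Φ_{2k}(X)` for odd `k > 1` (as `-ζ` is a primitive `2k`-th root
of unity) and `Φ_k(-X) = Φ_k(X)` for `4 ∣ k` (as then `Φ_k(X) = Φ_{k/2}(X²)`). The same
identities reduce `x = -1` to `x = 1`, where `Φ_n(1)` is `p` if `n` is a power of the prime
`p` and `1` otherwise.
-/

open Polynomial

theorem IsPrimitiveRoot.neg_of_odd {R : Type*} [CommRing R] [Nontrivial R] (hR : ringChar R ≠ 2)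
    {ζ : R} {n : ℕ} (h : IsPrimitiveRoot ζ n) (hn : Odd n) : IsPrimitiveRoot (-ζ) (2 * n) := by
  convert IsPrimitiveRoot.orderOf (-ζ)
  rw [neg_eq_neg_one_mul, (Commute.all _ _).orderOf_mul_eq_mul_orderOf_of_coprime,
    orderOf_neg_one, if_neg hR, ← h.eq_orderOf]
  rw [orderOf_neg_one, if_neg hR, ← h.eq_orderOf, Nat.coprime_two_left]
  exact hn

theorem cyclotomic_two_mul_of_odd {n : ℕ} (hn : Odd n) (h1 : 1 < n) (R : Type*) [CommRing R] :
    cyclotomic (2 * n) R = (cyclotomic n R).comp (-X) := by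
  suffices hℚ : cyclotomic (2 * n) ℚ = (cyclotomic n ℚ).comp (-X) by
    have hℤ : cyclotomic (2 * n) ℤ = (cyclotomic n ℤ).comp (-X) :=
      map_injective (Int.castRingHom ℚ) Int.cast_injective (by simpa [map_comp] using hℚ)
    simpa [map_comp] using congr_arg (map (Int.castRingHom R)) hℤ
  have hζ := Complex.isPrimitiveRoot_exp n (by omega)
  rw [cyclotomic_eq_minpoly_rat (hζ.neg_of_odd (by simp) hn) (by omega), minpoly.neg,
    ← cyclotomic_eq_minpoly_rat hζ (by omega), natDegree_cyclotomic,
    (Nat.totient_even (by rcases hn with ⟨j, rfl⟩; omega)).neg_one_pow, one_mul]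

theorem cyclotomic_comp_neg_X_of_even {n : ℕ} (hn : Even n) (R : Type*) [CommRing R] :
    (cyclotomic (2 * n) R).comp (-X) = cyclotomic (2 * n) R := by
  rw [mul_comm, ← cyclotomic_expand_eq_cyclotomic Nat.prime_two (even_iff_two_dvd.mp hn),
    expand_eq_comp_X_pow, comp_assoc]
  simp

theorem one_lt_eval_cyclotomic_of_two_le {n : ℕ} (hn : 1 < n) {x : ℤ} (hx : 2 ≤ x) :
    1 < eval x (cyclotomic n ℤ) := by
  lift x to ℕ using (by omega)
  have := sub_one_lt_natAbs_cyclotomic_eval hn (q := x) (by omega)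
  have hpos : 0 < eval (x : ℤ) (cyclotomic n ℤ) := cyclotomic_pos' n (by omega)
  omega

theorem one_lt_eval_cyclotomic_of_two_le_abs {n : ℕ} (hn : 2 < n) {x : ℤ} (hx : 2 ≤ |x|) :
    1 < eval x (cyclotomic n ℤ) := by
  rcases (le_abs'.mp hx).symm with hx | hx
  · exact one_lt_eval_cyclotomic_of_two_le (by omega) hx
  obtain ⟨y, rfl, hy⟩ : ∃ y, x = -y ∧ 2 ≤ y := ⟨-x, by ring, by omega⟩
  rcases Nat.even_or_odd n with ⟨m, rfl⟩ | hn_odd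
  · rw [← two_mul] at hn ⊢
    rcases Nat.even_or_odd m with hm | hm
    · rw [← cyclotomic_comp_neg_X_of_even hm, eval_comp]
      simpa using one_lt_eval_cyclotomic_of_two_le (by omega) hy
    · rw [cyclotomic_two_mul_of_odd hm (by omega), eval_comp]
      simpa using one_lt_eval_cyclotomic_of_two_le (by omega) hy
  · have := one_lt_eval_cyclotomic_of_two_le (n := 2 * n) (by omega) hy
    rwa [cyclotomic_two_mul_of_odd hn_odd (by omega), eval_comp, eval_neg, eval_X] at this

theorem eval_one_cyclotomic_of_prime_pow {p ℓ : ℕ} (hp : p.Prime) (hℓ : 0 < ℓ) (R : Type*)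
    [CommRing R] : eval 1 (cyclotomic (p ^ ℓ) R) = p := by
  obtain ⟨m, rfl⟩ : ∃ m, ℓ = m + 1 := ⟨ℓ - 1, by omega⟩
  have : Fact p.Prime := ⟨hp⟩
  exact eval_one_cyclotomic_prime_pow m

theorem eval_neg_one_cyclotomic_two_pow {ℓ : ℕ} (hℓ : 1 < ℓ) (R : Type*) [CommRing R] :
    eval (-1) (cyclotomic (2 ^ ℓ) R) = 2 := by
  obtain ⟨m, rfl⟩ : ∃ m, ℓ = m + 1 := ⟨ℓ - 1, by omega⟩
  rw [pow_succ', ← cyclotomic_comp_neg_X_of_even (by simp [Nat.even_pow]; omega), eval_comp,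
    ← pow_succ']
  simp [eval_one_cyclotomic_of_prime_pow Nat.prime_two m.succ_pos R]

theorem eval_neg_one_cyclotomic_of_not_two_pow {k : ℕ} (hk : 2 < k) (hk4 : k % 4 ≠ 2)
    (h : ¬∃ ℓ : ℕ, 1 < ℓ ∧ k = 2 ^ ℓ) (R : Type*) [CommRing R] :
    eval (-1) (cyclotomic k R) = 1 := by
  rcases Nat.even_or_odd k with ⟨m, rfl⟩ | hk_odd
  · rw [← two_mul] at hk hk4 h ⊢
    have hm : Even m := Nat.even_iff.mpr (by omega)
    rw [← cyclotomic_comp_neg_X_of_even hm, eval_comp]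
    simp only [eval_neg, eval_X, neg_neg]
    refine eval_one_cyclotomic_not_prime_pow fun {p} hp ℓ hpℓ ↦ ?_
    obtain rfl : p = 2 := hp.even_iff.mp (Nat.even_pow.mp (hpℓ ▸ even_two_mul m)).1
    refine h ⟨ℓ, ?_, hpℓ.symm⟩
    by_contra! hℓ
    interval_cases ℓ <;> omega
  · have h2k := congrArg (eval 1) (cyclotomic_two_mul_of_odd hk_odd (by omega) R)
    simp only [eval_comp, eval_neg, eval_X] at h2k
    rw [← h2k]
    refine eval_one_cyclotomic_not_prime_pow fun {p} hp ℓ hpℓ ↦ ?_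
    obtain rfl : p = 2 := hp.even_iff.mp (Nat.even_pow.mp (hpℓ ▸ even_two_mul k)).1
    obtain ⟨j, rfl⟩ := hk_odd
    rcases ℓ with _ | _ | ℓ
    · omega
    · omega
    · rw [pow_add] at hpℓ
      omega

theorem stmt7 (k : ℕ) (hk : 2 < k) (hk4 : k % 4 ≠ 2) (x : ℤ) :
    (((cyclotomic k ℤ).eval x = 1 ∨ (cyclotomic k ℤ).eval x = -1) ↔
      (x = 0 ∨
        (x = 1 ∧ ¬ ∃ (p ℓ : ℕ), p.Prime ∧ 0 < ℓ ∧ k = p ^ ℓ) ∨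
        (x = -1 ∧ ¬ ∃ ℓ : ℕ, 1 < ℓ ∧ k = 2 ^ ℓ))) ∧
    (∀ (p ℓ : ℕ), p.Prime → 0 < ℓ → k = p ^ ℓ → (cyclotomic k ℤ).eval 1 = (p : ℤ)) ∧
    (∀ ℓ : ℕ, 1 < ℓ → (cyclotomic (2 ^ ℓ) ℤ).eval (-1) = 2) := by
  refine ⟨?_, fun p ℓ hp hℓ hkp ↦ hkp ▸ eval_one_cyclotomic_of_prime_pow hp hℓ ℤ,
    fun ℓ hℓ ↦ eval_neg_one_cyclotomic_two_pow hℓ ℤ⟩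
  have hpos := cyclotomic_pos hk x
  rw [show _ ∨ _ ↔ eval x (cyclotomic k ℤ) = 1 by omega]
  constructor
  · intro h
    rcases (by omega : x = -1 ∨ x = 0 ∨ x = 1 ∨ x ≤ -2 ∨ 2 ≤ x) with rfl | rfl | rfl | hx
    · refine .inr (.inr ⟨rfl, ?_⟩)
      rintro ⟨ℓ, hℓ, rfl⟩
      simp [eval_neg_one_cyclotomic_two_pow hℓ] at h
    · exact .inl rfl
    · refine .inr (.inl ⟨rfl, ?_⟩)
      rintro ⟨p, ℓ, hp, hℓ, rfl⟩
      have := eval_one_cyclotomic_of_prime_pow hp hℓ ℤ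
      have := hp.two_le
      omega
    · have := one_lt_eval_cyclotomic_of_two_le_abs hk (le_abs'.mpr hx)
      omega
  · rintro (rfl | ⟨rfl, hk_not_prime_pow⟩ | ⟨rfl, hk_not_two_pow⟩)
    · rw [← coeff_zero_eq_eval_zero, cyclotomic_coeff_zero ℤ hk.le]
    · refine eval_one_cyclotomic_not_prime_pow fun hp ℓ hpℓ ↦
        hk_not_prime_pow ⟨_, ℓ, hp, ?_, hpℓ.symm⟩
      rw [Nat.pos_iff_ne_zero]
      rintro rfl
      rw [pow_zero] at hpℓ
      omega
    · exact eval_neg_one_cyclotomic_of_not_two_pow hk hk4 hk_not_two_pow ℤ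
end

section
/- Let k > 2 be an integer and let p be a prime such that either p is odd and p divides k, or p = 2 and 4 divides k. Then for every integer m, the p-adic valuation of Φ_k(m) is at most 1, i.e. p^2 does not divide Φ_k(m). -/
/-!
`Φ_{np}(X)` divides `(X^{np} - 1)/(X^n - 1) = ∑_{i<p} (X^n)^i`, so it suffices to show that `p²`
does not divide the geometric sum `∑_{i<p} a^i` for `a = m^n`. If `a ≢ 1 (mod p)`, Fermat's
little theorem makes this sum `≡ 1 (mod p)`. If `a ≡ 1 (mod p)` and `p` is odd, the sum is
`≡ p (mod p²)`. For `p = 2` the condition `4 ∣ k` makes `n` even, so `a` is a square and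
`1 + a ≢ 0 (mod 4)`.
-/

open Polynomial Finset

theorem cyclotomic_mul_dvd_geom_sum_X_pow {R : Type*} [CommRing R] [IsDomain R] {p : ℕ}
    (hp : 1 < p) (n : ℕ) : cyclotomic (n * p) R ∣ ∑ i ∈ range p, (X ^ n) ^ i := by
  rcases n.eq_zero_or_pos with rfl | hn
  · rw [zero_mul, cyclotomic_zero]
    exact one_dvd _
  have hmem : n ∈ (n * p).properDivisors :=
    Nat.mem_properDivisors.mpr ⟨dvd_mul_right n p, lt_mul_of_one_lt_right hn hp⟩
  have hne : (X ^ n - 1 : R[X]) ≠ 0 := by simpa using X_pow_sub_C_ne_zero hn (1 : R)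
  have hdvd := X_pow_sub_one_mul_cyclotomic_dvd_X_pow_sub_one_of_dvd R hmem
  rwa [pow_mul, ← mul_geom_sum (X ^ n) p, mul_dvd_mul_iff_left hne] at hdvd

theorem not_dvd_geom_sum_prime_of_not_dvd_sub_one {p : ℕ} (hp : p.Prime) {a : ℤ}
    (ha : ¬ (p : ℤ) ∣ a - 1) : ¬ (p : ℤ) ∣ ∑ i ∈ range p, a ^ i := by
  have := Fact.mk hp
  simp only [← ZMod.intCast_zmod_eq_zero_iff_dvd, Int.cast_sub, Int.cast_one, Int.cast_sum,
    Int.cast_pow] at ha ⊢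
  intro hsum
  -- Fermat: `(a - 1) * ∑ a ^ i = a ^ p - 1 = a - 1` in `ZMod p`.
  have hfermat := mul_geom_sum (a : ZMod p) p
  rw [hsum, mul_zero, ZMod.pow_card] at hfermat
  exact ha hfermat.symm

theorem not_sq_dvd_geom_sum_of_odd_prime {p : ℕ} (hp : p.Prime) (hodd : Odd p) (a : ℤ) :
    ¬ (p : ℤ) ^ 2 ∣ ∑ i ∈ range p, a ^ i := by
  by_cases ha : (p : ℤ) ∣ a - 1
  · obtain ⟨t, ht⟩ := ha
    obtain rfl : a = 1 + p * t := by linear_combination ht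
    have hcongr := odd_sq_dvd_geom_sum₂_sub (1 : ℤ) t hodd
    simp only [one_pow, mul_one] at hcongr
    intro hsq
    have hp2 : (p : ℤ) ^ 2 ∣ (p : ℤ) ^ 1 := by simpa using dvd_sub hsq hcongr
    replace hp2 : p ^ 2 ∣ p ^ 1 := by exact_mod_cast hp2
    have := (Nat.pow_dvd_pow_iff_le_right hp.one_lt).mp hp2
    omega
  · exact fun hsq => not_dvd_geom_sum_prime_of_not_dvd_sub_one hp ha
      ((dvd_pow_self _ two_ne_zero).trans hsq)

theorem not_four_dvd_geom_sum_two_of_isSquare {a : ℤ} (ha : IsSquare a) :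
    ¬ (4 : ℤ) ∣ ∑ i ∈ range 2, a ^ i := by
  obtain ⟨b, rfl⟩ := ha
  have hmod4 : ∀ x : ZMod 4, 1 + x * x ≠ 0 := by decide
  have h := hmod4 b
  rw [← Int.cast_mul, ← Int.cast_one, ← Int.cast_add, Ne,
    ZMod.intCast_zmod_eq_zero_iff_dvd] at h
  simpa [sum_range_succ] using h

theorem not_sq_dvd_eval_cyclotomic_mul_prime {p : ℕ} (hp : p.Prime) {n : ℕ}
    (h : Odd p ∨ (p = 2 ∧ Even n)) (m : ℤ) :
    ¬ (p : ℤ) ^ 2 ∣ (cyclotomic (n * p) ℤ).eval m := by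
  have hdvd : (cyclotomic (n * p) ℤ).eval m ∣ ∑ i ∈ range p, (m ^ n) ^ i := by
    simpa [eval_finsetSum] using
      eval_dvd (x := m) (cyclotomic_mul_dvd_geom_sum_X_pow hp.one_lt n)
  intro hsq
  rcases h with hodd | ⟨rfl, hn⟩
  · exact not_sq_dvd_geom_sum_of_odd_prime hp hodd _ (hsq.trans hdvd)
  · exact not_four_dvd_geom_sum_two_of_isSquare (hn.isSquare_pow m)
      (by simpa using hsq.trans hdvd)

theorem stmt12_general (k : ℕ) (p : ℕ) (hp : p.Prime)
    (h : (Odd p ∧ p ∣ k) ∨ (p = 2 ∧ 4 ∣ k)) :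
    ∀ m : ℤ, padicValInt p ((cyclotomic k ℤ).eval m) ≤ 1 ∧
      ¬ (p : ℤ) ^ 2 ∣ (cyclotomic k ℤ).eval m := by
  intro m
  have hnot : ¬ (p : ℤ) ^ 2 ∣ (cyclotomic k ℤ).eval m := by
    rcases h with ⟨hodd, n, rfl⟩ | ⟨rfl, t, rfl⟩
    · rw [mul_comm]
      exact not_sq_dvd_eval_cyclotomic_mul_prime hp (.inl hodd) m
    · rw [show 4 * t = (2 * t) * 2 by ring]
      exact not_sq_dvd_eval_cyclotomic_mul_prime hp (.inr ⟨rfl, even_two_mul t⟩) m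
  have := Fact.mk hp
  refine ⟨not_lt.mp fun hlt => hnot ?_, hnot⟩
  exact (padicValInt_dvd_iff 2 _).mpr (.inr hlt)

theorem stmt12 (k : ℕ) (hk : 2 < k) (p : ℕ) (hp : p.Prime)
    (h : (Odd p ∧ p ∣ k) ∨ (p = 2 ∧ 4 ∣ k)) :
    ∀ m : ℤ, padicValInt p ((cyclotomic k ℤ).eval m) ≤ 1 ∧
      ¬ (p : ℤ) ^ 2 ∣ (cyclotomic k ℤ).eval m :=
  stmt12_general k p hp h
end

section
/- Let p be an odd prime, let k be a squarefree positive integer divisible by p, and let m be an integer not divisible by p. Then the p-adic valuation of Φ_k(m) equals 1 if k = p·ord_p(m), and equals 0 otherwise, where ord_p(m) denotes the multiplicative order of m modulo p. -/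
open Polynomial

theorem stmt15 (p : ℕ) (hp : p.Prime) (hpodd : Odd p) (k : ℕ) (hk : 0 < k)
    (hsq : Squarefree k) (hpk : p ∣ k) (m : ℤ) (hm : ¬ (p : ℤ) ∣ m) :
    padicValInt p ((cyclotomic k ℤ).eval m) =
      if k = p * orderOf ((m : ZMod p)) then 1 else 0 := by
  haveI : Fact p.Prime := ⟨hp⟩
  obtain ⟨n, rfl⟩ := hpk
  have hp2 : 2 ≤ p := hp.two_le
  have hpne2 : p ≠ 2 := by
    rintro rfl; exact (Nat.not_odd_iff_even.mpr even_two) hpodd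
  have hn0 : 0 < n := Nat.pos_of_ne_zero (by rintro rfl; simp at hk)
  have hpn : ¬ p ∣ n := by
    rintro ⟨c, rfl⟩
    exact hp.not_isUnit (hsq p ⟨c, by ring⟩)
  set μ : ZMod p := (m : ZMod p) with hμdef
  have hμ : μ ≠ 0 := fun h => hm ((ZMod.intCast_zmod_eq_zero_iff_dvd m p).mp h)
  set d := orderOf μ with hd
  have hddvd : d ∣ p - 1 :=
    orderOf_dvd_of_pow_eq_one (ZMod.pow_card_sub_one_eq_one hμ)
  have hd0 : 0 < d := Nat.pos_of_dvd_of_pos hddvd (by omega)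
  haveI hnz : NeZero ((n : ZMod p)) :=
    ⟨fun h => hpn ((ZMod.natCast_eq_zero_iff n p).mp h)⟩
  have key : ∀ e : ℕ, (((cyclotomic e ℤ).eval m : ℤ) : ZMod p) =
      (cyclotomic e (ZMod p)).eval μ := by
    intro e
    rw [← map_cyclotomic_int e (ZMod p), eval_intCast_map]
    rfl
  have hiff : (p : ℤ) ∣ (cyclotomic (p * n) ℤ).eval m ↔ n = d := by
    rw [← ZMod.intCast_zmod_eq_zero_iff_dvd, key, mul_comm p n,
      cyclotomic_mul_prime_eq_pow_of_not_dvd (ZMod p) hpn, eval_pow,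
      pow_eq_zero_iff (by omega : p - 1 ≠ 0)]
    constructor
    · intro h
      exact ((isRoot_cyclotomic_iff (R := ZMod p)).mp h).eq_orderOf
    · intro h
      subst h
      exact (IsPrimitiveRoot.orderOf μ).isRoot_cyclotomic hd0
  by_cases hcase : n = d
  · rw [if_pos (by rw [hcase])]
    -- main case: show the valuation is exactly 1
    set E : ℤ := (cyclotomic (p * n) ℤ).eval m with hE
    have hpE : (p : ℤ) ∣ E := hiff.mpr hcase
    set a : ℤ := m ^ n with ha
    set S : ℤ := ∑ i ∈ Finset.range p, a ^ i with hS
    -- E divides S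
    have hES : E ∣ S := by
      have hsub : Nat.divisors n ⊆ Nat.divisors (p * n) :=
        Nat.divisors_subset_of_dvd (by positivity) (dvd_mul_left n p)
      have h2 : ((X : ℤ[X]) ^ n - 1) *
          ∏ e ∈ Nat.divisors (p * n) \ Nat.divisors n, cyclotomic e ℤ =
          (X : ℤ[X]) ^ (p * n) - 1 := by
        rw [← prod_cyclotomic_eq_X_pow_sub_one hn0 ℤ,
          ← prod_cyclotomic_eq_X_pow_sub_one (by positivity) ℤ,
          mul_comm, Finset.prod_sdiff hsub]
      have h1 : ((X : ℤ[X]) ^ n - 1) *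
          ∑ i ∈ Finset.range p, ((X : ℤ[X]) ^ n) ^ i = (X : ℤ[X]) ^ (p * n) - 1 := by
        rw [mul_comm, geom_sum_mul, ← pow_mul, mul_comm n p]
      have hXn : ((X : ℤ[X]) ^ n - 1) ≠ 0 := by
        intro h
        have := congrArg (fun q : ℤ[X] => q.eval 0) h
        simp [zero_pow hn0.ne'] at this
      have hCG : (∏ e ∈ Nat.divisors (p * n) \ Nat.divisors n, cyclotomic e ℤ) =
          ∑ i ∈ Finset.range p, ((X : ℤ[X]) ^ n) ^ i :=
        mul_left_cancel₀ hXn (h2.trans h1.symm)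
      have hmem : p * n ∈ Nat.divisors (p * n) \ Nat.divisors n := by
        rw [Finset.mem_sdiff, Nat.mem_divisors, Nat.mem_divisors]
        refine ⟨⟨dvd_rfl, by positivity⟩, fun h => ?_⟩
        have h1 := Nat.le_of_dvd hn0 h.1
        have h2 : 2 * n ≤ p * n := Nat.mul_le_mul_right n hp2
        omega
      have hdvdpoly : cyclotomic (p * n) ℤ ∣
          ∑ i ∈ Finset.range p, ((X : ℤ[X]) ^ n) ^ i := by
        rw [← hCG]
        exact Finset.dvd_prod_of_mem _ hmem
      have := map_dvd (evalRingHom m) hdvdpoly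
      simpa [hS, ha, pow_mul] using this
    -- p ∣ a - 1
    have haa : (p : ℤ) ∣ a - 1 := by
      rw [← ZMod.intCast_zmod_eq_zero_iff_dvd]
      simp only [ha, hcase]
      push_cast
      rw [← hμdef, pow_orderOf_eq_one μ]
      ring
    -- p ∣ T where S - p = (a-1) * T
    set T : ℤ := ∑ i ∈ Finset.range p, ∑ j ∈ Finset.range i, a ^ j with hT
    have hSp : S - p = (a - 1) * T := by
      have : S - p = ∑ i ∈ Finset.range p, (a ^ i - 1) := by
        rw [hS, Finset.sum_sub_distrib]
        simp
      rw [this, hT, Finset.mul_sum]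
      refine Finset.sum_congr rfl fun i _ => ?_
      rw [mul_comm, geom_sum_mul]
    have hpT : (p : ℤ) ∣ T := by
      rw [← ZMod.intCast_zmod_eq_zero_iff_dvd]
      have hone : ((m : ZMod p)) ^ n = 1 := by
        rw [← hμdef, hcase, pow_orderOf_eq_one μ]
      have hTcast : ((T : ℤ) : ZMod p) = ((∑ i ∈ Finset.range p, i : ℕ) : ZMod p) := by
        rw [hT]
        simp only [ha]
        push_cast
        refine Finset.sum_congr rfl fun i _ => ?_
        simp [hone]
      have h2ne : ((2 : ℕ) : ZMod p) ≠ 0 := by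
        rw [Ne, ZMod.natCast_eq_zero_iff]
        exact fun h => hpne2 ((Nat.prime_dvd_prime_iff_eq hp Nat.prime_two).mp h)
      have : ((T : ℤ) : ZMod p) * ((2:ℕ) : ZMod p) = 0 := by
        rw [hTcast, ← Nat.cast_mul, Finset.sum_range_id_mul_two,
          ZMod.natCast_eq_zero_iff]
        exact Dvd.intro _ rfl
      rcases mul_eq_zero.mp this with h | h
      · exact h
      · exact absurd h h2ne
    have hp2S : ¬ ((p : ℤ) ^ 2 ∣ S) := by
      intro h
      have h1 : (p : ℤ) ^ 2 ∣ S - p := by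
        rw [hSp, sq]
        exact mul_dvd_mul haa hpT
      have h2 : (p : ℤ) ^ 2 ∣ (p : ℤ) := (dvd_sub_right h).mp h1
      have h3 : (p : ℤ) ^ 2 ≤ p := Int.le_of_dvd (by exact_mod_cast hp.pos) h2
      have : (p : ℤ) * 1 < p * p := by
        apply mul_lt_mul_of_pos_left _ (by exact_mod_cast hp.pos)
        exact_mod_cast hp.one_lt
      nlinarith
    have hp2E : ¬ ((p : ℤ) ^ 2 ∣ E) := fun h => hp2S (h.trans hES)
    have hEne : E ≠ 0 := by
      intro h
      have hS0 : S = 0 := zero_dvd_iff.mp (h ▸ hES)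
      exact hp2S (hS0 ▸ dvd_zero _)
    have hge : 1 ≤ padicValInt p E := by
      have := (padicValInt_dvd_iff (p := p) 1 E).mp (by simpa using hpE)
      tauto
    have hlt : padicValInt p E < 2 := by
      by_contra h
      exact hp2E ((padicValInt_dvd_iff (p := p) 2 E).mpr (Or.inr (by omega)))
    omega
  · rw [if_neg (fun h => hcase (Nat.eq_of_mul_eq_mul_left hp.pos h))]
    exact padicValInt.eq_zero_of_not_dvd (fun h => hcase (hiff.mp h))
end

section
/- Let a > 0 and k > 2 be integers with k either odd or divisible by 4, and let m be an integer such that -m+ζ_k and -(m+a)+ζ_k are multiplicatively dependent and neither of them is a root of unity. Let p be a prime dividing both Φ_k(m) and Φ_k(m+a) with p not dividing k, set f_p = ord_k(p), and let n = ν_p(gcd(Φ_k(m), Φ_k(m+a))). Then f_p divides n and n ≤ ⌊ν_p(a)/f_p⌋·f_p. -/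
/-!
Since `p ∤ k` and `p ∣ Φ_k(m)`, the residue of `m` is a primitive `k`-th root of unity mod `p`,
so `k ∣ p - 1` and `f = 1`. Hensel's lemma lifts it to a primitive `k`-th root of unity
`z ∈ ℤ_p`, and `ζ ↦ z` embeds `ℚ(ζ_k)` into `ℚ_p`, where `-m + ζ` has norm `< 1`. A
multiplicative relation with `-(m + a) + ζ`, which is not a root of unity, forces
`‖z - (m + a)‖ ≠ 1`; by the ultrametric inequality `p ∣ a`. Finally `p^n` divides both
`m^k - 1` and `(m + a)^k - 1`, and `((m + a)^k - m^k) / a ≡ k m^(k-1) ≢ 0 (mod p)`, so `p^n ∣ a`.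
-/

open Polynomial

lemma IsRootOfUnity.of_zpow_eq_one {F : Type*} [Field F] {β : F} {s : ℤ}
    (hs : s ≠ 0) (h : β ^ s = 1) : IsRootOfUnity β := by
  refine ⟨s.natAbs, Int.natAbs_pos.mpr hs, ?_⟩
  rcases Int.natAbs_eq s with h' | h'
  · rwa [h', zpow_natCast] at h
  · rwa [h', zpow_neg, zpow_natCast, inv_eq_one] at h

lemma norm_map_ne_one_of_not_multIndep {K F : Type*} [Field K] [NormedField F] (φ : K →+* F)
    {α β : K} (hdep : ¬ MultIndep α β) (hβ : ¬ IsRootOfUnity β) (hα : ‖φ α‖ < 1) :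
    ‖φ β‖ ≠ 1 := by
  intro hβ1
  simp only [MultIndep, not_forall] at hdep
  obtain ⟨r, s, hrs, hne⟩ := hdep
  have hr : r = 0 := by
    have hnorm : ‖φ α‖ ^ r = 1 := by
      rw [← norm_zpow, ← map_zpow₀, hrs, map_zpow₀, norm_zpow, hβ1, one_zpow]
    exact (zpow_eq_one_iff_right₀ (norm_nonneg _) hα.ne).mp hnorm
  subst hr
  have hs : s ≠ 0 := fun hs => hne ⟨rfl, hs⟩
  exact hβ (.of_zpow_eq_one hs (by rw [← hrs, zpow_zero]))

lemma Padic.intCast_dvd_sub_of_not_multIndep {p : ℕ} [Fact p.Prime] {K : Type*} [Field K]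
    (φ : K →+* ℚ_[p]) {ζ : K} {m₁ m₂ : ℤ} (hζ : ‖φ ζ - m₁‖ < 1)
    (hdep : ¬ MultIndep (-(m₁ : K) + ζ) (-(m₂ : K) + ζ))
    (hru : ¬ IsRootOfUnity (-(m₂ : K) + ζ)) : (p : ℤ) ∣ m₁ - m₂ := by
  have hmap (c : ℤ) : φ (-(c : K) + ζ) = φ ζ - c := by
    rw [map_add, map_neg, map_intCast]; ring
  by_contra hp
  have h1 : ‖((m₁ - m₂ : ℤ) : ℚ_[p])‖ = 1 :=
    le_antisymm (norm_int_le_one _) (not_lt.mp (mt norm_intCast_lt_one_iff.mp hp))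
  apply norm_map_ne_one_of_not_multIndep φ hdep hru (by rwa [hmap])
  rw [hmap, show φ ζ - m₂ = (φ ζ - m₁) + ((m₁ - m₂ : ℤ) : ℚ_[p]) by push_cast; ring,
    IsUltrametricDist.norm_add_eq_max_of_norm_ne_norm (by rw [h1]; exact hζ.ne), h1,
    max_eq_right hζ.le]

lemma PadicInt.norm_lt_one_iff_toZMod_eq_zero {p : ℕ} [Fact p.Prime] {x : ℤ_[p]} :
    ‖x‖ < 1 ↔ toZMod x = 0 := by
  rw [← mem_nonunits, ← IsLocalRing.mem_maximalIdeal, ← ker_toZMod, RingHom.mem_ker]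

lemma PadicInt.exists_isPrimitiveRoot_toZMod_eq {p : ℕ} [Fact p.Prime] {a : ℤ_[p]} {k : ℕ}
    (hk : (k : ZMod p) ≠ 0) (ha : IsPrimitiveRoot (toZMod a) k) :
    ∃ z : ℤ_[p], IsPrimitiveRoot z k ∧ toZMod z = toZMod a := by
  have hder : ‖(derivative (X ^ k - 1 : ℤ_[p][X])).aeval a‖ = 1 := by
    refine le_antisymm (norm_le_one _) (not_lt.mp fun h => ?_)
    have hk₀ : k ≠ 0 := by rintro rfl; exact hk Nat.cast_zero
    rw [norm_lt_one_iff_toZMod_eq_zero] at h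
    simp [derivative_X_pow, hk, ha.ne_zero hk₀] at h
  have hval : ‖(X ^ k - 1 : ℤ_[p][X]).aeval a‖ < 1 := by
    rw [norm_lt_one_iff_toZMod_eq_zero]; simp [ha.pow_eq_one]
  obtain ⟨z, hz, hza, -, -⟩ :=
    hensels_lemma (F := (X ^ k - 1 : ℤ_[p][X])) (a := a) (by rw [hder, one_pow]; exact hval)
  rw [hder, norm_lt_one_iff_toZMod_eq_zero, map_sub, sub_eq_zero] at hza
  refine ⟨z, .mk ?_ fun l hl => ha.dvd_of_pow_eq_one l ?_, hza⟩
  · simpa [sub_eq_zero] using hz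
  · rw [← hza, ← map_pow, hl, map_one]

lemma ZMod.isPrimitiveRoot_of_dvd_eval_cyclotomic {p k : ℕ} [Fact p.Prime] (hpk : ¬ p ∣ k)
    {m : ℤ} (h : (p : ℤ) ∣ (cyclotomic k ℤ).eval m) : IsPrimitiveRoot (m : ZMod p) k := by
  have : NeZero (k : ZMod p) := ⟨by rwa [Ne, ZMod.natCast_eq_zero_iff]⟩
  rw [← isRoot_cyclotomic_iff, IsRoot.def, ← map_cyclotomic_int, eval_intCast_map]
  exact (ZMod.intCast_zmod_eq_zero_iff_dvd _ _).mpr h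

lemma ZMod.natCast_eq_one_of_isPrimitiveRoot {p k : ℕ} [Fact p.Prime] (hk : k ≠ 0)
    {w : ZMod p} (hw : IsPrimitiveRoot w k) : (p : ZMod k) = 1 := by
  have hdvd : k ∣ p - 1 :=
    hw.dvd_of_pow_eq_one _ (ZMod.pow_card_sub_one_eq_one (hw.ne_zero hk))
  rw [← Nat.cast_one, ZMod.natCast_eq_natCast_iff]
  exact ((Nat.modEq_iff_dvd' (Fact.out : p.Prime).one_le).mpr hdvd).symm

-- Instance search equips `CyclotomicField n ℚ` with `DivisionRing.toRatAlgebra`, not with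
-- `CyclotomicField.algebra`, so the library instance is not found for it.
instance CyclotomicField.isCyclotomicExtension_rat (n : ℕ) [NeZero n] :
    IsCyclotomicExtension {n} ℚ (CyclotomicField n ℚ) := by
  convert CyclotomicField.isCyclotomicExtension n ℚ
  · rfl
  · exact Subsingleton.elim _ _

lemma IsPrimitiveRoot.exists_algHom_apply_eq {k : ℕ} [NeZero k] {K L : Type*} [Field K]
    [Field L] [CharZero L] [Algebra ℚ K] [IsCyclotomicExtension {k} ℚ K] {ζ : K}
    (hζ : IsPrimitiveRoot ζ k) {w : L} (hw : IsPrimitiveRoot w k) :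
    ∃ φ : K →ₐ[ℚ] L, φ ζ = w := by
  let e := hζ.embeddingsEquivPrimitiveRoots L (cyclotomic.irreducible_rat (NeZero.pos k))
  exact ⟨e.symm ⟨w, (mem_primitiveRoots (NeZero.pos k)).mpr hw⟩,
    congrArg Subtype.val (e.apply_symm_apply _)⟩

lemma pow_dvd_sub_of_pow_dvd_pow_sub_one {R : Type*} [CommRing R] [IsDomain R] {p x y : R}
    {k n : ℕ} (hp : Prime p) (hxy : p ∣ x - y) (hx : ¬ p ∣ x) (hk : ¬ p ∣ (k : R))
    (hxk : p ^ n ∣ x ^ k - 1) (hyk : p ^ n ∣ y ^ k - 1) : p ^ n ∣ x - y := by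
  refine hp.pow_dvd_of_dvd_mul_left n (not_dvd_geom_sum₂ hp hxy hx hk) ?_
  rw [geom_sum₂_mul, ← sub_sub_sub_cancel_right _ _ 1]
  exact dvd_sub hxk hyk

lemma eval_cyclotomic_dvd_pow_sub_one {R : Type*} [CommRing R] (k : ℕ) (c : R) :
    (cyclotomic k R).eval c ∣ c ^ k - 1 := by
  simpa using eval_dvd (x := c) (cyclotomic.dvd_X_pow_sub_one k R)

theorem stmt16_general (a : ℕ) (ha : 0 < a) (k : ℕ+) (m : ℤ)
    (ζ : CyclotomicField k ℚ) (hζ : IsPrimitiveRoot ζ (k : ℕ))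
    (hdep : ¬ MultIndep (-(m : CyclotomicField k ℚ) + ζ)
      (-((m + (a : ℤ) : ℤ) : CyclotomicField k ℚ) + ζ))
    (hru2 : ¬ IsRootOfUnity (-((m + (a : ℤ) : ℤ) : CyclotomicField k ℚ) + ζ))
    (p : ℕ) (hp : p.Prime)
    (hpm : (p : ℤ) ∣ (cyclotomic (k : ℕ) ℤ).eval m)
    (hpk : ¬ p ∣ (k : ℕ))
    (f n : ℕ) (hf : f = orderOf ((p : ZMod (k : ℕ))))
    (hn : n = padicValNat p
      (Int.gcd ((cyclotomic (k : ℕ) ℤ).eval m) ((cyclotomic (k : ℕ) ℤ).eval (m + (a : ℤ))))) :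
    f ∣ n ∧ n ≤ padicValNat p a / f * f := by
  have := Fact.mk hp
  have hm : IsPrimitiveRoot (m : ZMod p) k := ZMod.isPrimitiveRoot_of_dvd_eval_cyclotomic hpk hpm
  rw [hf, ZMod.natCast_eq_one_of_isPrimitiveRoot k.ne_zero hm, orderOf_one, Nat.div_one, mul_one]
  refine ⟨one_dvd n, ?_⟩
  obtain ⟨z, hz, hzm⟩ := PadicInt.exists_isPrimitiveRoot_toZMod_eq (a := m)
    (by rwa [Ne, ZMod.natCast_eq_zero_iff]) (by rwa [map_intCast])
  obtain ⟨φ, hφ⟩ : ∃ φ : CyclotomicField k ℚ →ₐ[ℚ] ℚ_[p], φ ζ = z :=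
    hζ.exists_algHom_apply_eq
      (hz.map_of_injective (f := PadicInt.Coe.ringHom) Subtype.coe_injective)
  have hzm' : ‖((z - m : ℤ_[p]) : ℚ_[p])‖ < 1 := by
    rw [← PadicInt.norm_def, PadicInt.norm_lt_one_iff_toZMod_eq_zero, map_sub, hzm, sub_self]
  have hpa : (p : ℤ) ∣ m - (m + a) :=
    Padic.intCast_dvd_sub_of_not_multIndep φ.toRingHom (by simpa [hφ] using hzm') hdep hru2
  have hgcd : (p : ℤ) ^ n ∣ Int.gcd ((cyclotomic (k : ℕ) ℤ).eval m)
      ((cyclotomic (k : ℕ) ℤ).eval (m + (a : ℤ))) := by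
    rw [hn]; exact_mod_cast pow_padicValNat_dvd
  have hpn : (p : ℤ) ^ n ∣ m - (m + a) :=
    pow_dvd_sub_of_pow_dvd_pow_sub_one (Nat.prime_iff_prime_int.mp hp) hpa
      (fun h => hm.ne_zero k.ne_zero ((ZMod.intCast_zmod_eq_zero_iff_dvd _ _).mpr h))
      (by exact_mod_cast hpk)
      ((hgcd.trans (Int.gcd_dvd_left _ _)).trans (eval_cyclotomic_dvd_pow_sub_one _ _))
      ((hgcd.trans (Int.gcd_dvd_right _ _)).trans (eval_cyclotomic_dvd_pow_sub_one _ _))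
  rw [sub_add_cancel_left, dvd_neg] at hpn
  exact (padicValNat_dvd_iff_le ha.ne').mp (by exact_mod_cast hpn)

theorem stmt16 (a : ℕ) (ha : 0 < a) (k : ℕ+) (hk : 2 < (k : ℕ))
    (hodd : Odd (k : ℕ) ∨ 4 ∣ (k : ℕ)) (m : ℤ)
    (ζ : CyclotomicField k ℚ) (hζ : IsPrimitiveRoot ζ (k : ℕ))
    (hdep : ¬ MultIndep (-(m : CyclotomicField k ℚ) + ζ)
      (-((m + (a : ℤ) : ℤ) : CyclotomicField k ℚ) + ζ))
    (hru1 : ¬ IsRootOfUnity (-(m : CyclotomicField k ℚ) + ζ))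
    (hru2 : ¬ IsRootOfUnity (-((m + (a : ℤ) : ℤ) : CyclotomicField k ℚ) + ζ))
    (p : ℕ) (hp : p.Prime)
    (hpm : (p : ℤ) ∣ (cyclotomic (k : ℕ) ℤ).eval m)
    (hpma : (p : ℤ) ∣ (cyclotomic (k : ℕ) ℤ).eval (m + (a : ℤ)))
    (hpk : ¬ p ∣ (k : ℕ))
    (f n : ℕ) (hf : f = orderOf ((p : ZMod (k : ℕ))))
    (hn : n = padicValNat p
      (Int.gcd ((cyclotomic (k : ℕ) ℤ).eval m) ((cyclotomic (k : ℕ) ℤ).eval (m + (a : ℤ))))) :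
    f ∣ n ∧ n ≤ padicValNat p a / f * f :=
  stmt16_general a ha k m ζ hζ hdep hru2 p hp hpm hpk f n hf hn
end
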